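/- arXiv:1811.03019 — 4 statements merged into one kernel-verified Lean document; each statement's English description precedes it below -/
import Mathlib

section
/- Let v, b₁, …, bₙ ∈ ℤ^{n+1} be linearly independent, and let L be the lattice generated by {v, b₁, …, bₙ}. Suppose v, b''₁, …, b''ₙ are also linearly independent vectors generating the same lattice L. Then there exist integers α₁, …, αₙ such that, setting b'ᵢ = bᵢ + αᵢ·v for each i, the vectors v, b'₁, …, b'ₙ generate L and the real linear span of {b'₁, …, b'ₙ} equals the real linear span of {b''₁, …, b''ₙ}. -/
/-- The real vector corresponding to an integer vector. -/
noncomputable def toR {m : ℕ} (x : Fin m → ℤ) : EuclideanSpace ℝ (Fin m) :=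
  WithLp.toLp 2 (fun i => (x i : ℝ))

/-- The lattice generated by `v, b₁, …, bₙ` (integer vectors), i.e. all integer
combinations `z₀·v + Σᵢ zᵢ·bᵢ`. -/
def latt {n m : ℕ} (v : Fin m → ℤ) (b : Fin n → Fin m → ℤ) : Set (Fin m → ℤ) :=
  {x | ∃ z₀ : ℤ, ∃ z : Fin n → ℤ, x = z₀ • v + ∑ i, z i • b i}

/-- `toR` as a `ℤ`-linear map. -/
noncomputable def toRHom {m : ℕ} : (Fin m → ℤ) →ₗ[ℤ] EuclideanSpace ℝ (Fin m) where
  toFun := toR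
  map_add' x y := by ext i; simp [toR]
  map_smul' z x := by
    ext i
    simp [toR, zsmul_eq_mul]

lemma toR_comb {n m : ℕ} (v : Fin m → ℤ) (b : Fin n → Fin m → ℤ) (z₀ : ℤ) (z : Fin n → ℤ) :
    toR (z₀ • v + ∑ i, z i • b i) = z₀ • toR v + ∑ i, z i • toR (b i) := by
  rw [show toR (z₀ • v + ∑ i, z i • b i) = toRHom (z₀ • v + ∑ i, z i • b i) from rfl,
    map_add, map_smul, map_sum]
  simp only [map_smul]
  rfl

lemma latt_shift {n m : ℕ} (v : Fin m → ℤ) (b : Fin n → Fin m → ℤ) (α : Fin n → ℤ) :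
    latt v (fun i => b i + α i • v) = latt v b := by
  ext x
  constructor
  · rintro ⟨z₀, z, rfl⟩
    refine ⟨z₀ + ∑ i, z i * α i, z, ?_⟩
    simp only [smul_add, add_smul, Finset.sum_add_distrib, Finset.sum_smul, mul_smul]
    abel
  · rintro ⟨z₀, z, rfl⟩
    refine ⟨z₀ - ∑ i, z i * α i, z, ?_⟩
    simp only [smul_add, sub_smul, add_smul, Finset.sum_add_distrib, Finset.sum_smul, mul_smul]
    abel

/-- If `v, b₁, …, bₙ` and `v, b''₁, …, b''ₙ` are two linearly independent
families of integer vectors generating the same lattice `L`, then there are integers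
`α₁, …, αₙ` such that `v, b₁+α₁v, …, bₙ+αₙv` also generate `L` and the real span of
`{bᵢ+αᵢv}ᵢ` equals the real span of `{b''ᵢ}ᵢ`. -/
theorem mdsp_basis_shift (n : ℕ) (v : Fin (n+1) → ℤ) (b b'' : Fin n → Fin (n+1) → ℤ)
    (hli : LinearIndependent ℝ (Fin.cons (toR v) (fun i => toR (b i)) : Fin (n+1) → _))
    (hli'' : LinearIndependent ℝ (Fin.cons (toR v) (fun i => toR (b'' i)) : Fin (n+1) → _))
    (hlat : latt v b'' = latt v b) :
    ∃ α : Fin n → ℤ,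
      latt v (fun i => b i + α i • v) = latt v b ∧
      Submodule.span ℝ (Set.range fun i => toR (b i + α i • v)) =
        Submodule.span ℝ (Set.range fun i => toR (b'' i)) := by
  classical
  -- each `b i` lies in the lattice generated by `v, b''`
  have hb : ∀ i, ∃ z₀ : ℤ, ∃ z : Fin n → ℤ, b i = z₀ • v + ∑ j, z j • b'' j := by
    intro i
    have : b i ∈ latt v b := by
      refine ⟨0, fun j => if j = i then 1 else 0, ?_⟩
      simp [Finset.sum_ite_eq']
    rw [← hlat] at this
    exact this
  choose c w hw using hb
  refine ⟨fun i => -(c i), latt_shift v b _, ?_⟩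
  set U := Submodule.span ℝ (Set.range fun i => toR (b'' i)) with hU
  have hbval : ∀ i, b i + (-(c i)) • v = ∑ j, w i j • b'' j := by
    intro i
    rw [hw i]
    simp only [neg_smul]
    abel
  have zmem : ∀ (z : ℤ) (x : EuclideanSpace ℝ (Fin (n+1)))
      (S : Submodule ℝ (EuclideanSpace ℝ (Fin (n+1)))), x ∈ S → z • x ∈ S := by
    intro z x S hx
    rw [← Int.cast_smul_eq_zsmul ℝ]
    exact S.smul_mem _ hx
  have hmem : ∀ i, toR (b i + (-(c i)) • v) ∈ U := by
    intro i
    rw [hbval i]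
    have : toR (∑ j, w i j • b'' j) = ∑ j, w i j • toR (b'' j) := by
      have := toR_comb v b'' 0 (w i)
      simpa using this
    rw [this]
    exact Submodule.sum_mem _ fun j _ =>
      zmem _ _ _ (Submodule.subset_span ⟨j, rfl⟩)
  -- v is not in U
  have hvU : toR v ∉ U := by
    have := (linearIndependent_fin_cons (v := fun i => toR (b'' i))).mp hli''
    exact this.2
  apply le_antisymm
  · rw [Submodule.span_le]
    rintro x ⟨i, rfl⟩
    exact hmem i
  · rw [Submodule.span_le]
    rintro x ⟨i, rfl⟩
    -- b'' i ∈ latt v b'' = latt v b = latt v b'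
    have : b'' i ∈ latt v (fun j => b j + (-(c j)) • v) := by
      rw [latt_shift, ← hlat]
      exact ⟨0, fun j => if j = i then 1 else 0, by simp [Finset.sum_ite_eq']⟩
    obtain ⟨d, e, he⟩ := this
    have heR : toR (b'' i) = d • toR v + ∑ j, e j • toR (b j + (-(c j)) • v) := by
      rw [he]; exact toR_comb v _ d e
    have hsum : (∑ j, e j • toR (b j + (-(c j)) • v)) ∈ U :=
      Submodule.sum_mem _ fun j _ => zmem _ _ _ (hmem j)
    have hdv : d • toR v ∈ U := by
      have : d • toR v = toR (b'' i) - ∑ j, e j • toR (b j + (-(c j)) • v) := by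
        rw [heR]; abel
      rw [this]
      exact Submodule.sub_mem _ (Submodule.subset_span ⟨i, rfl⟩) hsum
    have hd0 : d = 0 := by
      by_contra hd
      apply hvU
      have : toR v = ((d : ℝ)⁻¹) • ((d : ℝ) • toR v) := by
        rw [smul_smul, inv_mul_cancel₀ (by exact_mod_cast hd), one_smul]
      rw [this]
      refine Submodule.smul_mem _ _ ?_
      rwa [Int.cast_smul_eq_zsmul]
    show toR (b'' i) ∈ _
    rw [heR, hd0, zero_smul, zero_add]
    exact Submodule.sum_mem _ fun j _ =>
      zmem _ _ _ (Submodule.subset_span ⟨j, rfl⟩)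
end

section
/- Let v, b₁, …, bₙ ∈ ℝ^{n+1} be linearly independent. For each i let γᵢ = ⟨bᵢ, v⟩/‖v‖² and b'ᵢ = bᵢ − γᵢ·v. Let L be an invertible n×n real matrix such that the vectors b''ᵢ = Σₖ L_{ki}·b'ₖ form an orthonormal family, let r₁, …, rₙ be the rows of L, and let z = −Lᵀ·γ where γ = (γ₁, …, γₙ). Then for j ∈ ℤⁿ, the vector j maximizes dist(v, span{b₁ + j₁·v, …, bₙ + jₙ·v}) over all integer vectors in ℤⁿ if and only if the lattice point Σᵢ jᵢ·rᵢ minimizes the Euclidean distance to z over all points of the lattice {Σᵢ zᵢ·rᵢ : z ∈ ℤⁿ}. -/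
set_option maxHeartbeats 800000

open scoped RealInnerProductSpace

/-- The orthogonal projection of `v` onto the span of `S`. -/
noncomputable def projSpan {m : ℕ} (S : Set (EuclideanSpace ℝ (Fin m)))
    (v : EuclideanSpace ℝ (Fin m)) : EuclideanSpace ℝ (Fin m) :=
  (Submodule.orthogonalProjectionOnto (Submodule.span ℝ S) v : EuclideanSpace ℝ (Fin m))

/-- `dist(v, ⟨S⟩) = ‖v − proj_{⟨S⟩}(v)‖`. -/
noncomputable def distSpan {m : ℕ} (v : EuclideanSpace ℝ (Fin m))
    (S : Set (EuclideanSpace ℝ (Fin m))) : ℝ :=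
  ‖v - projSpan S v‖

lemma key_dist_formula {n : ℕ} (v : EuclideanSpace ℝ (Fin (n+1)))
    (b : Fin n → EuclideanSpace ℝ (Fin (n+1))) (hv : v ≠ 0)
    (γ : Fin n → ℝ) (hγ : ∀ i, γ i = ⟪b i, v⟫ / ‖v‖ ^ 2)
    (L : Matrix (Fin n) (Fin n) ℝ) (hL : IsUnit L.det)
    (horth : Orthonormal ℝ (fun i => ∑ k, L k i • (b k - γ k • v)))
    (w : Fin n → ℝ) :
    (distSpan v (Set.range fun i => b i + w i • v))^2 *
      (1 + ‖v‖^2 * ∑ k, (∑ i, L i k * (γ i + w i))^2) = ‖v‖^2 := by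
  classical
  have hv2 : (0:ℝ) < ‖v‖^2 := pow_pos (norm_pos_iff.mpr hv) 2
  set b'' : Fin n → EuclideanSpace ℝ (Fin (n+1)) :=
    fun i => ∑ k, L k i • (b k - γ k • v) with hb''
  set t : Fin n → ℝ := fun k => ∑ i, L i k * (γ i + w i) with ht
  set T : ℝ := ∑ k, (t k)^2 with hTdef
  have hT0 : 0 ≤ T := Finset.sum_nonneg fun k _ => sq_nonneg _
  set D : ℝ := 1 + ‖v‖^2 * T with hDdef
  have hD : 0 < D := by
    have := mul_nonneg hv2.le hT0
    rw [hDdef]; linarith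
  set C : ℝ := D⁻¹ with hCdef
  have hCD : C * D = 1 := inv_mul_cancel₀ hD.ne'
  have hCD' : C * (1 + ‖v‖^2 * T) = 1 := by rw [← hDdef]; exact hCD
  have hinv : ∀ a i, ∑ m, L a m * L⁻¹ m i = if a = i then (1:ℝ) else 0 := by
    intro a i
    have h := Matrix.mul_nonsing_inv L hL
    calc ∑ m, L a m * L⁻¹ m i = (L * L⁻¹) a i := (Matrix.mul_apply).symm
      _ = (1 : Matrix (Fin n) (Fin n) ℝ) a i := by rw [h]
      _ = if a = i then (1:ℝ) else 0 := Matrix.one_apply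
  have h1 : ∀ k, ⟪b k - γ k • v, v⟫ = 0 := by
    intro k
    rw [inner_sub_left, real_inner_smul_left, hγ, real_inner_self_eq_norm_sq,
      div_mul_cancel₀ _ hv2.ne', sub_self]
  have h2 : ∀ m, ⟪b'' m, v⟫ = 0 := by
    intro m
    simp only [hb'', sum_inner, real_inner_smul_left, h1, mul_zero, Finset.sum_const_zero]
  have h3 : ∀ m m', ⟪b'' m, b'' m'⟫ = if m = m' then (1:ℝ) else 0 := by
    intro m m'
    exact orthonormal_iff_ite.mp horth m m'
  have h4 : ∀ i, b i - γ i • v = ∑ m, L⁻¹ m i • b'' m := by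
    intro i
    have e : ∑ m, L⁻¹ m i • b'' m
        = ∑ k, (∑ m, L k m * L⁻¹ m i) • (b k - γ k • v) := by
      simp only [hb'', Finset.smul_sum]
      rw [Finset.sum_comm]
      refine Finset.sum_congr rfl fun k _ => ?_
      rw [Finset.sum_smul]
      refine Finset.sum_congr rfl fun m _ => ?_
      rw [smul_smul]
      congr 1
      ring
    rw [e]
    simp only [hinv]
    simp
  set wvec : EuclideanSpace ℝ (Fin (n+1)) := ∑ m, t m • b'' m with hwvec
  have h5 : ⟪wvec, v⟫ = 0 := by
    simp only [hwvec, sum_inner, real_inner_smul_left, h2, mul_zero, Finset.sum_const_zero]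
  have h6' : ∀ m', ⟪wvec, b'' m'⟫ = t m' := by
    intro m'
    simp only [hwvec, sum_inner, real_inner_smul_left, h3, mul_ite, mul_one, mul_zero]
    simp
  have h6 : ⟪wvec, wvec⟫ = T := by
    conv_lhs => rw [hwvec]
    rw [inner_sum]
    simp only [real_inner_smul_right, h6']
    rw [hTdef]
    exact Finset.sum_congr rfl fun m _ => by rw [← hwvec, h6', sq]
  have h7 : ∀ i, ⟪wvec, b i - γ i • v⟫ = γ i + w i := by
    intro i
    rw [h4 i, inner_sum]
    simp only [real_inner_smul_right, h6']
    have e : ∑ m, L⁻¹ m i * t m = ∑ a, (∑ m, L a m * L⁻¹ m i) * (γ a + w a) := by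
      simp only [ht, Finset.mul_sum, Finset.sum_mul]
      rw [Finset.sum_comm]
      exact Finset.sum_congr rfl fun a _ => Finset.sum_congr rfl fun m _ => by ring
    rw [e]
    simp only [hinv]
    simp
  set ρ : EuclideanSpace ℝ (Fin (n+1)) := C • (v - (‖v‖^2) • wvec) with hρ
  set S : Set (EuclideanSpace ℝ (Fin (n+1))) := Set.range fun i => b i + w i • v with hS
  set K : Submodule ℝ (EuclideanSpace ℝ (Fin (n+1))) := Submodule.span ℝ S with hK
  set p : EuclideanSpace ℝ (Fin (n+1)) :=
    ∑ k, (C * ‖v‖^2 * (∑ m, L k m * t m)) • (b k + w k • v) with hp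
  have hmem : p ∈ K := by
    refine Submodule.sum_mem _ fun k _ => Submodule.smul_mem _ _ ?_
    exact Submodule.subset_span ⟨k, rfl⟩
  have hs1 : ∑ k, (∑ m, L k m * t m) • (b k - γ k • v) = wvec := by
    rw [hwvec]
    simp only [hb'', Finset.smul_sum]
    rw [Finset.sum_comm]
    refine Finset.sum_congr rfl fun k _ => ?_
    rw [Finset.sum_smul]
    refine Finset.sum_congr rfl fun m _ => ?_
    rw [smul_smul]
    congr 1
    ring
  have hs2 : ∑ k, (∑ m, L k m * t m) * (γ k + w k) = T := by
    rw [hTdef]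
    have e : ∀ k, (∑ m, L k m * t m) * (γ k + w k) = ∑ m, t m * (L k m * (γ k + w k)) := by
      intro k; rw [Finset.sum_mul]; exact Finset.sum_congr rfl fun m _ => by ring
    simp only [e]
    rw [Finset.sum_comm]
    refine Finset.sum_congr rfl fun m _ => ?_
    rw [← Finset.mul_sum, sq]
  have hpval : p = (C * ‖v‖^2) • wvec + (C * ‖v‖^2 * T) • v := by
    rw [hp]
    have e1 : ∀ k, (C * ‖v‖^2 * (∑ m, L k m * t m)) • (b k + w k • v)
        = (C * ‖v‖^2) • ((∑ m, L k m * t m) • (b k - γ k • v))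
          + (C * ‖v‖^2 * ((∑ m, L k m * t m) * (γ k + w k))) • v := by
      intro k
      match_scalars <;> ring
    simp only [e1]
    rw [Finset.sum_add_distrib, ← Finset.smul_sum, hs1]
    congr 1
    rw [← Finset.sum_smul, ← Finset.mul_sum, hs2]
  have hdecomp : v - p = ρ := by
    rw [hpval, hρ]
    have h1C : 1 - C * ‖v‖^2 * T = C := by linear_combination -hCD'
    match_scalars
    · linarith [h1C]
    · ring
  have h8 : ∀ i, ⟪v - p, b i + w i • v⟫ = 0 := by
    intro i
    rw [hdecomp, hρ]
    have e1 : b i + w i • v = (b i - γ i • v) + (γ i + w i) • v := by module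
    rw [e1]
    have hvb : ⟪v, b i - γ i • v⟫ = 0 := by rw [real_inner_comm]; exact h1 i
    simp only [real_inner_smul_left, inner_add_right, inner_sub_left,
      real_inner_smul_right, hvb, h5, h7, real_inner_self_eq_norm_sq]
    ring
  have horthK : ∀ u ∈ K, ⟪v - p, u⟫ = 0 := by
    intro u hu
    induction hu using Submodule.span_induction with
    | mem x hx => obtain ⟨i, rfl⟩ := hx; exact h8 i
    | zero => simp
    | add x y _ _ hx hy => rw [inner_add_right, hx, hy]; ring
    | smul a x _ hx => rw [real_inner_smul_right, hx]; ring
  have hproj : ((Submodule.orthogonalProjectionOnto K v : EuclideanSpace ℝ (Fin (n+1)))) = p :=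
    Submodule.eq_starProjection_of_mem_of_inner_eq_zero hmem horthK
  have hdistval : distSpan v S = ‖ρ‖ := by
    calc distSpan v S = ‖v - projSpan S v‖ := rfl
      _ = ‖v - p‖ := by rw [show projSpan S v = p from hproj]
      _ = ‖ρ‖ := by rw [hdecomp]
  have hvw : ⟪v, wvec⟫ = 0 := by rw [real_inner_comm]; exact h5
  have hvv : ⟪v, v⟫ = ‖v‖^2 := real_inner_self_eq_norm_sq v
  have hx : ⟪(v - ‖v‖^2 • wvec : EuclideanSpace ℝ (Fin (n+1))),
      (v - ‖v‖^2 • wvec : EuclideanSpace ℝ (Fin (n+1)))⟫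
      = ‖v‖^2 + ‖v‖^2 * ‖v‖^2 * T := by
    simp only [inner_sub_left, inner_sub_right, real_inner_smul_left, real_inner_smul_right,
      hvw, h5, h6, hvv]
    ring
  have hnorm : ‖ρ‖^2 = C * ‖v‖^2 := by
    rw [hρ, norm_smul, Real.norm_eq_abs, mul_pow, sq_abs,
      ← real_inner_self_eq_norm_sq (v - ‖v‖^2 • wvec), hx]
    linear_combination (C * ‖v‖^2) * hCD'
  rw [hdistval, hnorm]
  linear_combination ‖v‖^2 * hCD

/-- Lemma 3: In the setting of the MDSP-to-CVP reduction, `j ∈ ℤⁿ` maximizes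
`dist(v, span{bᵢ + jᵢ·v})` iff the lattice point `Σᵢ jᵢ·rᵢ` (where `rᵢ` are the rows of `L`)
is closest to `z = −Lᵀ·γ` among points of the lattice generated by the `rᵢ`. -/
theorem mdsp_cvp_equiv (n : ℕ) (v : EuclideanSpace ℝ (Fin (n+1)))
    (b : Fin n → EuclideanSpace ℝ (Fin (n+1)))
    (hli : LinearIndependent ℝ (Fin.cons v b : Fin (n+1) → EuclideanSpace ℝ (Fin (n+1))))
    (γ : Fin n → ℝ) (hγ : ∀ i, γ i = ⟪b i, v⟫ / ‖v‖ ^ 2)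
    (L : Matrix (Fin n) (Fin n) ℝ) (hL : IsUnit L.det)
    (horth : Orthonormal ℝ (fun i => ∑ k, L k i • (b k - γ k • v)))
    (r : Fin n → EuclideanSpace ℝ (Fin n)) (hr : ∀ i k, r i k = L i k)
    (z : EuclideanSpace ℝ (Fin n)) (hz : ∀ k, z k = -(L.transpose.mulVec γ k))
    (j : Fin n → ℤ) :
    (∀ j' : Fin n → ℤ,
        distSpan v (Set.range fun i => b i + (j' i : ℝ) • v) ≤
          distSpan v (Set.range fun i => b i + (j i : ℝ) • v)) ↔
    (∀ j' : Fin n → ℤ,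
        dist (∑ i, (j i : ℝ) • r i) z ≤ dist (∑ i, (j' i : ℝ) • r i) z) := by
  classical
  have hv : v ≠ 0 := by
    have := hli.ne_zero 0
    simpa using this
  have hv2 : (0:ℝ) < ‖v‖^2 := pow_pos (norm_pos_iff.mpr hv) 2
  set T : (Fin n → ℤ) → ℝ := fun j' => ∑ k, (∑ i, L i k * (γ i + (j' i : ℝ)))^2 with hT
  have hT0 : ∀ j', 0 ≤ T j' := fun j' => Finset.sum_nonneg fun k _ => sq_nonneg _
  have hkey : ∀ j' : Fin n → ℤ,
      (distSpan v (Set.range fun i => b i + (j' i : ℝ) • v))^2 * (1 + ‖v‖^2 * T j') = ‖v‖^2 :=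
    fun j' => key_dist_formula v b hv γ hγ L hL horth (fun i => (j' i : ℝ))
  have hdist : ∀ j' : Fin n → ℤ, (dist (∑ i, (j' i : ℝ) • r i) z)^2 = T j' := by
    intro j'
    rw [EuclideanSpace.dist_eq, Real.sq_sqrt (Finset.sum_nonneg fun k _ => sq_nonneg _)]
    refine Finset.sum_congr rfl fun k _ => ?_
    rw [Real.dist_eq, sq_abs]
    congr 1
    have e1 : (∑ i, (j' i : ℝ) • r i) k = ∑ i, (j' i : ℝ) * L i k := by
      have e0 : (∑ i, (j' i : ℝ) • r i) k = ∑ i, (j' i : ℝ) * r i k :=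
        by simp [WithLp.ofLp_sum, Finset.sum_apply]
      rw [e0]
      exact Finset.sum_congr rfl fun i _ => by rw [hr]
    rw [e1, hz k]
    simp only [Matrix.mulVec, dotProduct, Matrix.transpose_apply]
    rw [sub_neg_eq_add, ← Finset.sum_add_distrib]
    exact Finset.sum_congr rfl fun i _ => by ring
  have hds0 : ∀ j', 0 ≤ distSpan v (Set.range fun i => b i + ((j' : Fin n → ℤ) i : ℝ) • v) :=
    fun j' => norm_nonneg _
  have hiff : ∀ j₁ j₂ : Fin n → ℤ,
      (distSpan v (Set.range fun i => b i + (j₁ i : ℝ) • v) ≤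
        distSpan v (Set.range fun i => b i + (j₂ i : ℝ) • v)) ↔ T j₂ ≤ T j₁ := by
    intro j₁ j₂
    rw [← pow_le_pow_iff_left₀ (hds0 j₁) (hds0 j₂) (two_ne_zero)]
    have h₁ := hkey j₁
    have h₂ := hkey j₂
    have hp₁ : (0:ℝ) < 1 + ‖v‖^2 * T j₁ := by nlinarith [hT0 j₁]
    have hp₂ : (0:ℝ) < 1 + ‖v‖^2 * T j₂ := by nlinarith [hT0 j₂]
    set A₁ := distSpan v (Set.range fun i => b i + (j₁ i : ℝ) • v) with hA₁
    set A₂ := distSpan v (Set.range fun i => b i + (j₂ i : ℝ) • v) with hA₂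
    have hA1pos : 0 < A₁^2 := by nlinarith [sq_nonneg A₁]
    have hA2pos : 0 < A₂^2 := by nlinarith [sq_nonneg A₂]
    constructor
    · intro h
      by_contra hc
      push_neg at hc
      have hlt : 1 + ‖v‖^2 * T j₁ < 1 + ‖v‖^2 * T j₂ := by nlinarith
      nlinarith [mul_le_mul_of_nonneg_right h hp₁.le,
        mul_lt_mul_of_pos_left hlt hA2pos]
    · intro h
      have hle : 1 + ‖v‖^2 * T j₂ ≤ 1 + ‖v‖^2 * T j₁ := by nlinarith
      nlinarith [mul_le_mul_of_nonneg_left hle hA1pos.le, hp₂]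
  have hiff2 : ∀ j₁ j₂ : Fin n → ℤ,
      (dist (∑ i, (j₁ i : ℝ) • r i) z ≤ dist (∑ i, (j₂ i : ℝ) • r i) z) ↔ T j₁ ≤ T j₂ := by
    intro j₁ j₂
    rw [← pow_le_pow_iff_left₀ dist_nonneg dist_nonneg (two_ne_zero), hdist, hdist]
  constructor
  · intro h j'
    exact (hiff2 j j').mpr ((hiff j' j).mp (h j'))
  · intro h j'
    exact (hiff j' j).mpr ((hiff2 j j').mp (h j'))
end

section
/- Let s₁, …, sₙ ∈ ℝⁿ be linearly independent and t ∈ ℝⁿ (an instance of the closest vector problem). Let L be the n×n matrix whose i-th row is sᵢ, and let γ = −(Lᵀ)^{-1}·t. Let {e₀, e''₁, …, e''ₙ} be an orthonormal basis of ℝ^{n+1}, let B'' be the (n+1)×n matrix with columns e''₁, …, e''ₙ, let B' = B''·L^{-1} with columns e'₁, …, e'ₙ, and set eᵢ = e'ᵢ + γᵢ·e₀ for each i. If j ∈ ℤⁿ maximizes dist(e₀, span{e₁ + j₁·e₀, …, eₙ + jₙ·e₀}) over all integer vectors in ℤⁿ, then Σᵢ jᵢ·sᵢ is a closest point to t in the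 lattice {Σᵢ zᵢ·sᵢ : z ∈ ℤⁿ}. -/
open scoped RealInnerProductSpace

theorem eucl_sum_apply {ι κ : Type*} [Fintype ι] (g : ι → EuclideanSpace ℝ κ) (k : κ) :
    (∑ x, g x) k = ∑ x, g x k := by
  classical
  induction (Finset.univ : Finset ι) using Finset.induction with
  | empty => simp
  | insert _ _ h ih => rw [Finset.sum_insert h, Finset.sum_insert h, ← ih]; rfl

lemma aux_dist (n : ℕ) (s : Fin n → EuclideanSpace ℝ (Fin n))
    (t : EuclideanSpace ℝ (Fin n))
    (L : Matrix (Fin n) (Fin n) ℝ) (hU : IsUnit L) (hLdef : ∀ i k, L i k = s i k)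
    (γ : Fin n → ℝ) (hγ : γ = -(L.transpose)⁻¹.mulVec fun k => t k)
    (e₀ : EuclideanSpace ℝ (Fin (n+1))) (e'' : Fin n → EuclideanSpace ℝ (Fin (n+1)))
    (horth : Orthonormal ℝ (Fin.cons e₀ e'' : Fin (n+1) → EuclideanSpace ℝ (Fin (n+1))))
    (e : Fin n → EuclideanSpace ℝ (Fin (n+1)))
    (he : ∀ i r, e i r = (∑ k, e'' k r * L⁻¹ k i) + γ i * e₀ r)
    (c : Fin n → ℤ) :
    distSpan e₀ (Set.range fun i => e i + (c i : ℝ) • e₀)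
      = Real.sqrt (1 / (1 + dist (∑ i, (c i : ℝ) • s i) t ^ 2)) := by
  classical
  have hUd : IsUnit L.det := (Matrix.isUnit_iff_isUnit_det L).mp hU
  have hUtd : IsUnit L.transpose.det := by rwa [Matrix.det_transpose]
  set A := L⁻¹ with hA
  have hAL : A * L = 1 := Matrix.nonsing_inv_mul L hUd
  have hLA : L * A = 1 := Matrix.mul_nonsing_inv L hUd
  set f : Fin (n+1) → EuclideanSpace ℝ (Fin (n+1)) := Fin.cons e₀ e'' with hf
  -- coefficients
  set cc : Fin n → ℝ := fun i => γ i + (c i : ℝ) with hcc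
  set w : Fin n → ℝ := fun k => ∑ i, L i k * cc i with hwdef
  set W : ℝ := ∑ k, w k ^ 2 with hWdef
  have hW0 : 0 ≤ W := Finset.sum_nonneg fun k _ => sq_nonneg _
  have hW1 : (0:ℝ) < 1 + W := by linarith
  -- w is the CVP error vector
  have hLtγ : ∀ k, (∑ i, L i k * γ i) = - t k := by
    intro k
    have h : L.transpose.mulVec γ = - fun k => t k := by
      rw [hγ, Matrix.mulVec_neg, Matrix.mulVec_mulVec,
        Matrix.mul_nonsing_inv _ hUtd, Matrix.one_mulVec]
    have h2 := congrFun h k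
    simpa [Matrix.mulVec, dotProduct, Matrix.transpose_apply] using h2
  have hw : ∀ k, w k = (∑ i, (c i : ℝ) * s i k) - t k := by
    intro k
    rw [hwdef]
    simp only [hcc, mul_add]
    rw [Finset.sum_add_distrib, hLtγ k]
    have h : ∀ i, L i k * (c i : ℝ) = (c i : ℝ) * s i k := by
      intro i; rw [hLdef]; ring
    rw [Finset.sum_congr rfl fun i _ => h i]
    ring
  -- distance to t
  have hdist : dist (∑ i, (c i : ℝ) • s i) t ^ 2 = W := by
    rw [EuclideanSpace.dist_eq, Real.sq_sqrt (Finset.sum_nonneg fun k _ => sq_nonneg _)]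
    rw [hWdef]
    refine Finset.sum_congr rfl fun k _ => ?_
    rw [Real.dist_eq, sq_abs, hw k]
    have hX : (∑ i, (c i : ℝ) • s i) k = ∑ i, (c i : ℝ) * s i k := by
      rw [eucl_sum_apply]; rfl
    rw [hX]
  -- inner products of coefficient combinations
  have hip : ∀ d g : Fin (n+1) → ℝ,
      ⟪(∑ m, d m • f m), (∑ m, g m • f m)⟫ = ∑ m, d m * g m := by
    intro d g
    rw [sum_inner]
    refine Finset.sum_congr rfl fun m _ => ?_
    rw [real_inner_smul_left, horth.inner_right_fintype]
  -- the vectors spanning the subspace, in coefficient form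
  set V : Fin n → EuclideanSpace ℝ (Fin (n+1)) := fun i => e i + (c i : ℝ) • e₀ with hV
  set D : Fin n → Fin (n+1) → ℝ := fun i => Fin.cons (cc i) (fun k => A k i) with hD
  have hVco : ∀ i, V i = ∑ m, D i m • f m := by
    intro i
    ext r
    have h1 : (∑ m, D i m • f m) r = ∑ m, D i m * f m r := by
      rw [eucl_sum_apply]; rfl
    show e i r + (c i : ℝ) * e₀ r = _
    rw [h1, Fin.sum_univ_succ]
    simp only [hD, hf, Fin.cons_zero, Fin.cons_succ]
    rw [he i r, hcc]
    rw [Finset.sum_congr rfl fun k (_ : k ∈ Finset.univ) => (mul_comm (A k i) (e'' k r))]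
    ring
  -- optimal combination
  set b : Fin n → ℝ := fun k => w k / (1 + W) with hb
  set a : Fin n → ℝ := L.mulVec b with ha
  set p : EuclideanSpace ℝ (Fin (n+1)) := ∑ i, a i • V i with hp
  set R : Fin (n+1) → ℝ := Fin.cons (1 / (1 + W)) (fun k => - b k) with hR
  -- key coefficient identities
  have hsum1 : ∀ k, (∑ i, a i * A k i) = b k := by
    intro k
    have h : (A.mulVec a) k = b k := by
      rw [ha, Matrix.mulVec_mulVec, hAL, Matrix.one_mulVec]
    rw [← h]
    simp [Matrix.mulVec, dotProduct, mul_comm]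
  have hsum2 : (∑ i, a i * cc i) = W / (1 + W) := by
    have h1 : (∑ i, a i * cc i) = ∑ i, (∑ k, L i k * b k) * cc i := by
      refine Finset.sum_congr rfl fun i _ => ?_
      rfl
    rw [h1]
    have h2 : ∀ i, (∑ k, L i k * b k) * cc i = ∑ k, b k * (L i k * cc i) := by
      intro i; rw [Finset.sum_mul]; exact Finset.sum_congr rfl fun k _ => by ring
    rw [Finset.sum_congr rfl fun i (_ : i ∈ Finset.univ) => h2 i, Finset.sum_comm]
    have h3 : ∀ k, (∑ i, b k * (L i k * cc i)) = w k ^ 2 / (1 + W) := by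
      intro k
      rw [← Finset.mul_sum]
      show w k / (1 + W) * (∑ i, L i k * cc i) = w k ^ 2 / (1 + W)
      show w k / (1 + W) * w k = w k ^ 2 / (1 + W)
      ring
    rw [Finset.sum_congr rfl fun k (_ : k ∈ Finset.univ) => h3 k, ← Finset.sum_div, ← hWdef]
  -- residual in coefficient form
  have hres : e₀ - p = ∑ m, R m • f m := by
    have hpco : p = ∑ m, (∑ i, a i * D i m) • f m := by
      rw [hp]
      rw [Finset.sum_congr rfl fun i (_ : i ∈ Finset.univ) => congrArg (a i • ·) (hVco i)]
      rw [Finset.sum_congr rfl fun i (_ : i ∈ Finset.univ) => Finset.smul_sum]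
      rw [Finset.sum_comm]
      refine Finset.sum_congr rfl fun m _ => ?_
      rw [Finset.sum_smul]
      exact Finset.sum_congr rfl fun i _ => smul_smul _ _ _
    have he₀ : e₀ = ∑ m, (Fin.cons 1 (fun _ => 0) : Fin (n+1) → ℝ) m • f m := by
      rw [Fin.sum_univ_succ]
      simp [hf]
    rw [hpco]
    conv_lhs => rw [he₀]
    rw [← Finset.sum_sub_distrib]
    refine Finset.sum_congr rfl fun m _ => ?_
    rw [← sub_smul]
    congr 1
    refine Fin.cases ?_ (fun k => ?_) m
    · simp only [hD, hR, Fin.cons_zero]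
      rw [hsum2]
      field_simp
      ring
    · simp only [hD, hR, Fin.cons_succ]
      rw [hsum1 k]
      ring
  -- p is in the span
  have hpK : p ∈ Submodule.span ℝ (Set.range V) := by
    rw [hp]
    exact Submodule.sum_mem _ fun i _ =>
      Submodule.smul_mem _ _ (Submodule.subset_span (Set.mem_range_self i))
  -- orthogonality of residual to the generators
  have horthres : ∀ i, ⟪V i, e₀ - p⟫ = 0 := by
    intro i
    rw [hres, hVco i, hip]
    rw [Fin.sum_univ_succ]
    simp only [hD, hR, Fin.cons_zero, Fin.cons_succ]
    have h4 : (∑ k, A k i * - b k) = - (cc i / (1 + W)) := by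
      have h5 : ∀ k, A k i * - b k = - (A k i * w k) / (1 + W) := by
        intro k; rw [hb]; field_simp
      rw [Finset.sum_congr rfl fun k (_ : k ∈ Finset.univ) => h5 k, ← Finset.sum_div]
      have h6 : (∑ k, - (A k i * w k)) = - cc i := by
        rw [Finset.sum_neg_distrib]
        congr 1
        -- ∑ k, A k i * w k = cc i
        have h7 : (∑ k, A k i * w k) = ((A.transpose * L.transpose).mulVec cc) i := by
          rw [← Matrix.mulVec_mulVec]
          simp only [Matrix.mulVec, dotProduct, Matrix.transpose_apply]
          rfl
        rw [h7, ← Matrix.transpose_mul, hLA, Matrix.transpose_one, Matrix.one_mulVec]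
      rw [h6]
      ring
    rw [h4]
    ring
  have horthres' : e₀ - p ∈ (Submodule.span ℝ (Set.range V))ᗮ := by
    rw [Submodule.mem_orthogonal]
    intro u hu
    induction hu using Submodule.span_induction with
    | mem x hx =>
      obtain ⟨i, rfl⟩ := hx
      exact horthres i
    | zero => simp
    | add x y _ _ hx hy => rw [inner_add_left, hx, hy]; ring
    | smul r x _ hx => rw [inner_smul_left, hx]; simp
  -- the projection is p
  have hproj : (Submodule.orthogonalProjectionOnto (Submodule.span ℝ (Set.range V)) e₀ :
      EuclideanSpace ℝ (Fin (n+1))) = p :=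
    Submodule.eq_starProjection_of_mem_orthogonal hpK horthres'
  -- norm of the residual
  have hnorm : ‖e₀ - p‖ ^ 2 = 1 / (1 + W) := by
    rw [← real_inner_self_eq_norm_sq, hres, hip]
    rw [Fin.sum_univ_succ]
    simp only [hR, Fin.cons_zero, Fin.cons_succ, neg_mul_neg]
    have h8 : ∀ k, b k * b k = w k ^ 2 / (1 + W) ^ 2 := by
      intro k; rw [hb]; field_simp
    rw [Finset.sum_congr rfl fun k (_ : k ∈ Finset.univ) => h8 k, ← Finset.sum_div, ← hWdef]
    field_simp
  -- conclude
  rw [distSpan, projSpan, hproj, hdist]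
  rw [show ‖e₀ - p‖ = Real.sqrt (‖e₀ - p‖ ^ 2) from (Real.sqrt_sq (norm_nonneg _)).symm, hnorm]

/-- Lemma 4: CVP-to-MDSP reduction. Given a CVP instance `(s₁, …, sₙ; t)`,
with `L` the matrix whose rows are the `sᵢ`, `γ = −(Lᵀ)⁻¹·t`, an orthonormal basis
`{e₀, e''₁, …, e''ₙ}` of `ℝ^{n+1}`, `B' = B''·L⁻¹` with columns `e'ᵢ`, and
`eᵢ = e'ᵢ + γᵢ·e₀`: if `j` maximizes `dist(e₀, span{eᵢ + jᵢ·e₀})` over `ℤⁿ`, then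
`Σᵢ jᵢ·sᵢ` is a closest lattice point to `t`. -/
theorem cvp_from_mdsp (n : ℕ) (s : Fin n → EuclideanSpace ℝ (Fin n))
    (hs : LinearIndependent ℝ s) (t : EuclideanSpace ℝ (Fin n))
    (L : Matrix (Fin n) (Fin n) ℝ) (hLdef : ∀ i k, L i k = s i k)
    (γ : Fin n → ℝ) (hγ : γ = -(L.transpose)⁻¹.mulVec fun k => t k)
    (e₀ : EuclideanSpace ℝ (Fin (n+1))) (e'' : Fin n → EuclideanSpace ℝ (Fin (n+1)))
    (horth : Orthonormal ℝ (Fin.cons e₀ e'' : Fin (n+1) → EuclideanSpace ℝ (Fin (n+1))))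
    (e : Fin n → EuclideanSpace ℝ (Fin (n+1)))
    (he : ∀ i r, e i r = (∑ k, e'' k r * L⁻¹ k i) + γ i * e₀ r)
    (j : Fin n → ℤ)
    (hj : ∀ j' : Fin n → ℤ,
        distSpan e₀ (Set.range fun i => e i + (j' i : ℝ) • e₀) ≤
          distSpan e₀ (Set.range fun i => e i + (j i : ℝ) • e₀)) :
    ∀ z : Fin n → ℤ, dist (∑ i, (j i : ℝ) • s i) t ≤ dist (∑ i, (z i : ℝ) • s i) t := by
  have hU : IsUnit L := by
    rw [← Matrix.linearIndependent_rows_iff_isUnit (K := ℝ)]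
    have : L.row = (WithLp.linearEquiv 2 ℝ (Fin n → ℝ)).toLinearMap ∘ s := by
      funext i k; exact hLdef i k
    rw [this]
    exact hs.map' _ (LinearEquiv.ker _)
  intro z
  have h1 := hj z
  rw [aux_dist n s t L hU hLdef γ hγ e₀ e'' horth e he z,
    aux_dist n s t L hU hLdef γ hγ e₀ e'' horth e he j] at h1
  set dj := dist (∑ i, (j i : ℝ) • s i) t with hdj
  set dz := dist (∑ i, (z i : ℝ) • s i) t with hdz
  have hdj0 : 0 ≤ dj := dist_nonneg
  have hdz0 : 0 ≤ dz := dist_nonneg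
  have h2 : 1 / (1 + dz ^ 2) ≤ 1 / (1 + dj ^ 2) := by
    exact (Real.sqrt_le_sqrt_iff (x := 1 / (1 + dz ^ 2)) (y := 1 / (1 + dj ^ 2))
      (by positivity)).mp h1
  have h3 : 1 + dj ^ 2 ≤ 1 + dz ^ 2 := by
    have hpos : (0:ℝ) < 1 + dj ^ 2 := by positivity
    have hpos2 : (0:ℝ) < 1 + dz ^ 2 := by positivity
    rw [div_le_div_iff₀ hpos2 hpos] at h2
    nlinarith
  nlinarith
end

section
/- Let u, w ∈ ℝ^m be linearly independent, define f(x) = |⟨w, u − x·w⟩|/‖u − x·w‖ for x ∈ ℝ, and let α' = ⟨w, u⟩/‖w‖². Let α ∈ {⌊α'⌋, ⌈α'⌉} be such that f(α) = min(f(⌊α'⌋), f(⌈α'⌉)). Then f(α) ≤ f(j) for every integer j ∈ ℤ. -/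
open scoped RealInnerProductSpace

/-- For linearly independent `u, w ∈ ℝ^m`, with
`f(x) = |⟨w, u − x·w⟩|/‖u − x·w‖` and `α' = ⟨w, u⟩/‖w‖²`, the better of the two integers
`⌊α'⌋, ⌈α'⌉` minimizes `f` over all integers. -/
theorem round_minimizes_projection (m : ℕ) (u w : EuclideanSpace ℝ (Fin m))
    (h : LinearIndependent ℝ ![u, w])
    (f : ℝ → ℝ) (hf : ∀ x, f x = |⟪w, u - x • w⟫| / ‖u - x • w‖)
    (α' : ℝ) (hα' : α' = ⟪w, u⟫ / ‖w‖ ^ 2)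
    (α : ℤ) (hmem : α = ⌊α'⌋ ∨ α = ⌈α'⌉)
    (hα : f (α : ℝ) = min (f (⌊α'⌋ : ℝ)) (f (⌈α'⌉ : ℝ))) :
    ∀ j : ℤ, f (α : ℝ) ≤ f (j : ℝ) := by
  rw [linearIndependent_fin2] at h
  obtain ⟨hw, hne⟩ := h
  simp only [Matrix.cons_val_one, Matrix.head_cons, Matrix.cons_val_zero] at hw hne
  -- basic quantities
  set A : ℝ := ‖w‖ ^ 2 with hA_def
  set B : ℝ := ⟪w, u⟫ with hB_def
  set C : ℝ := ‖u‖ ^ 2 with hC_def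
  have hA : 0 < A := pow_pos (norm_pos_iff.2 hw) 2
  have hsub : ∀ x : ℝ, u - x • w ≠ 0 := by
    intro x hx
    exact hne x (by rw [sub_eq_zero] at hx; exact hx.symm)
  have hip : ∀ x : ℝ, ⟪w, u - x • w⟫ = B - x * A := by
    intro x
    rw [inner_sub_right, inner_smul_right, real_inner_self_eq_norm_sq]
  have hnorm : ∀ x : ℝ, ‖u - x • w‖ ^ 2 = C - 2 * B * x + A * x ^ 2 := by
    intro x
    rw [@norm_sub_sq_real, inner_smul_right, real_inner_comm, norm_smul]
    simp [hA_def, hB_def, hC_def, mul_pow]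
    ring
  have hD : 0 < A * C - B ^ 2 := by
    have h1 : 0 < ‖u - α' • w‖ ^ 2 := pow_pos (norm_pos_iff.2 (hsub α')) 2
    have h2 : A * C - B ^ 2 = A * ‖u - α' • w‖ ^ 2 := by
      rw [hnorm α', hα']
      field_simp
      ring
    rw [h2]
    exact mul_pos hA h1
  -- key monotonicity lemma
  have key : ∀ x y : ℝ, |x - α'| ≤ |y - α'| → f x ≤ f y := by
    intro x y hxy
    rw [hf x, hf y]
    have hnx : 0 < ‖u - x • w‖ := norm_pos_iff.2 (hsub x)
    have hny : 0 < ‖u - y • w‖ := norm_pos_iff.2 (hsub y)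
    rw [div_le_div_iff₀ hnx hny]
    have hsq : (|⟪w, u - x • w⟫| * ‖u - y • w‖) ^ 2 ≤ (|⟪w, u - y • w⟫| * ‖u - x • w‖) ^ 2 := by
      rw [mul_pow, mul_pow, sq_abs, sq_abs, hip, hip, hnorm, hnorm]
      have hxy2 : (A * x - B) ^ 2 ≤ (A * y - B) ^ 2 := by
        have h1 : (x - α') ^ 2 ≤ (y - α') ^ 2 := by
          rw [← sq_abs (x - α'), ← sq_abs (y - α')]
          exact pow_le_pow_left₀ (abs_nonneg _) hxy 2
        have hx' : A * x - B = A * (x - α') := by rw [hα']; field_simp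
        have hy' : A * y - B = A * (y - α') := by rw [hα']; field_simp
        rw [hx', hy', mul_pow, mul_pow]
        nlinarith [sq_nonneg A]
      nlinarith [mul_nonneg (mul_pos hA hD).le (sub_nonneg.2 hxy2), sq_nonneg A, hA]
    have h1 : 0 ≤ |⟪w, u - y • w⟫| * ‖u - x • w‖ := by positivity
    exact (pow_le_pow_iff_left₀ (by positivity) h1 (by norm_num)).1 hsq
  intro j
  rcases le_or_gt (j : ℝ) (⌊α'⌋ : ℝ) with hj | hj
  · have : f (⌊α'⌋ : ℝ) ≤ f (j : ℝ) := by
      apply key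
      have h1 : (⌊α'⌋ : ℝ) ≤ α' := Int.floor_le α'
      have h2 : (j : ℝ) ≤ α' := le_trans hj h1
      rw [abs_of_nonpos (by linarith), abs_of_nonpos (by linarith)]
      linarith
    calc f (α : ℝ) ≤ f (⌊α'⌋ : ℝ) := hα ▸ min_le_left _ _
      _ ≤ f (j : ℝ) := this
  · have hj' : (⌈α'⌉ : ℝ) ≤ (j : ℝ) := by
      have : (⌊α'⌋ : ℤ) < j := by exact_mod_cast hj
      have : ⌈α'⌉ ≤ j := le_trans (Int.ceil_le_floor_add_one α') (by omega)
      exact_mod_cast this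
    have : f (⌈α'⌉ : ℝ) ≤ f (j : ℝ) := by
      apply key
      have h1 : α' ≤ (⌈α'⌉ : ℝ) := Int.le_ceil α'
      rw [abs_of_nonneg (by linarith), abs_of_nonneg (by linarith)]
      linarith
    calc f (α : ℝ) ≤ f (⌈α'⌉ : ℝ) := hα ▸ min_le_right _ _
      _ ≤ f (j : ℝ) := this
end
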